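/- arXiv:1310.5084 — 8 statements merged into one kernel-verified Lean document; each statement's English description precedes it below -/
import Mathlib

section
/- Let U and V be finite sets of nonnegative integers and let M be the maximum value of U − U (assume M ≥ 0). Let U ⊕ V = {u + v : u ∈ U, v ∈ V}, and for each integer k define f(k) = |(U ⊕ V) ∩ (k + (U ⊕ V))|. If every element of U ⊕ V has a unique representation u + v with u ∈ U, v ∈ V, then for every n > 2M: ∑_{k=M}^{n-1-M} f(k) ≤ |U|²·∑_{k=0}^{n-1} |V ∩ (k+V)| ≤ ∑_{k=-M}^{n-1+M} f(k). -/
open Pointwise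

/-- Bounds relating correlation sums of a sumset `U ⊕ V` (with unique representation)
to those of `V`, where `M = max (U - U)`. -/
theorem stmt_2 (U V : Finset ℤ) (hUne : U.Nonempty) (hVne : V.Nonempty)
    (hU : ∀ u ∈ U, 0 ≤ u) (hV : ∀ v ∈ V, 0 ≤ v)
    (M : ℤ) (hM0 : 0 ≤ M) (hMmem : M ∈ U - U) (hMmax : ∀ x ∈ U - U, x ≤ M)
    (huniq : ∀ u ∈ U, ∀ v ∈ V, ∀ u' ∈ U, ∀ v' ∈ V, u + v = u' + v' → u = u' ∧ v = v')
    (n : ℕ) (hn : 2 * M < (n : ℤ)) :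
    (∑ k ∈ Finset.Icc M ((n : ℤ) - 1 - M), ((U + V) ∩ (U + V).image (k + ·)).card)
      ≤ U.card ^ 2 * ∑ k ∈ Finset.range n, (V ∩ V.image ((k : ℤ) + ·)).card ∧
    U.card ^ 2 * ∑ k ∈ Finset.range n, (V ∩ V.image ((k : ℤ) + ·)).card
      ≤ ∑ k ∈ Finset.Icc (-M) ((n : ℤ) - 1 + M), ((U + V) ∩ (U + V).image (k + ·)).card := by
  set g : ℤ → ℕ := fun d => (V ∩ V.image (d + ·)).card with hgdef
  -- g d as a card of a filtered product
  have hgcard : ∀ d : ℤ, g d = ((V ×ˢ V).filter (fun q : ℤ × ℤ => q.1 = d + q.2)).card := by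
    intro d
    refine (Finset.card_bij (fun q _ => q.1) ?_ ?_ ?_).symm
    · rintro ⟨v, v'⟩ hq
      simp only [Finset.mem_filter, Finset.mem_product] at hq
      simp only [Finset.mem_inter, Finset.mem_image]
      exact ⟨hq.1.1, v', hq.1.2, hq.2.symm⟩
    · rintro ⟨v1, v2⟩ h1 ⟨w1, w2⟩ h2 h
      simp only [Finset.mem_filter, Finset.mem_product] at h1 h2
      simp only at h
      have : v2 = w2 := by omega
      simp [h, this]
    · intro x hx
      simp only [Finset.mem_inter, Finset.mem_image] at hx
      obtain ⟨hxV, v', hv', hev⟩ := hx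
      exact ⟨(x, v'), Finset.mem_filter.mpr ⟨Finset.mem_product.mpr ⟨hxV, hv'⟩, hev.symm⟩, rfl⟩
  -- f k as double sum of g
  have hfcard : ∀ k : ℤ, ((U + V) ∩ (U + V).image (k + ·)).card
      = ∑ u ∈ U, ∑ u' ∈ U, g (k + u' - u) := by
    intro k
    have h1 : ((U + V) ∩ (U + V).image (k + ·)).card
        = (((U ×ˢ V) ×ˢ (U ×ˢ V)).filter
            (fun p : (ℤ × ℤ) × (ℤ × ℤ) => p.1.1 + p.1.2 = k + (p.2.1 + p.2.2))).card := by
      refine (Finset.card_bij (fun p _ => p.1.1 + p.1.2) ?_ ?_ ?_).symm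
      · rintro ⟨⟨u, v⟩, ⟨u', v'⟩⟩ hp
        simp only [Finset.mem_filter, Finset.mem_product] at hp
        obtain ⟨⟨⟨hu, hv⟩, hu', hv'⟩, heq⟩ := hp
        simp only [Finset.mem_inter, Finset.mem_image]
        exact ⟨Finset.add_mem_add hu hv, u' + v', Finset.add_mem_add hu' hv', heq.symm⟩
      · rintro ⟨⟨u, v⟩, ⟨u', v'⟩⟩ hp ⟨⟨a, b⟩, ⟨a', b'⟩⟩ hq h
        simp only [Finset.mem_filter, Finset.mem_product] at hp hq
        obtain ⟨⟨⟨hu, hv⟩, hu', hv'⟩, heq⟩ := hp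
        obtain ⟨⟨⟨ha, hb⟩, ha', hb'⟩, heq'⟩ := hq
        simp only at h
        obtain ⟨e1, e2⟩ := huniq u hu v hv a ha b hb h
        have h2 : u' + v' = a' + b' := by omega
        obtain ⟨e3, e4⟩ := huniq u' hu' v' hv' a' ha' b' hb' h2
        simp [e1, e2, e3, e4]
      · intro x hx
        simp only [Finset.mem_inter, Finset.mem_image] at hx
        obtain ⟨hx1, y, hy, hey⟩ := hx
        rw [Finset.mem_add] at hx1 hy
        obtain ⟨u, hu, v, hv, huv⟩ := hx1
        obtain ⟨u', hu', v', hv', huv'⟩ := hy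
        refine ⟨((u, v), (u', v')), ?_, huv⟩
        simp only [Finset.mem_filter, Finset.mem_product]
        exact ⟨⟨⟨hu, hv⟩, hu', hv'⟩, by omega⟩
    rw [h1, Finset.card_filter, Finset.sum_product]
    simp only [Finset.sum_product]
    refine Finset.sum_congr rfl fun u hu => ?_
    rw [Finset.sum_comm]
    refine Finset.sum_congr rfl fun u' hu' => ?_
    rw [hgcard, Finset.card_filter, Finset.sum_product]
    refine Finset.sum_congr rfl fun v hv => Finset.sum_congr rfl fun v' hv' => ?_
    exact if_congr (by constructor <;> intro h <;> omega) rfl rfl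
  -- bound on differences
  have hdiff : ∀ u ∈ U, ∀ u' ∈ U, -M ≤ u' - u ∧ u' - u ≤ M := by
    intro u hu u' hu'
    constructor
    · have := hMmax (u - u') (Finset.sub_mem_sub hu hu')
      omega
    · exact hMmax (u' - u) (Finset.sub_mem_sub hu' hu)
  -- shifting sums of g over Icc
  have hshift : ∀ (a b c : ℤ), (∑ k ∈ Finset.Icc a b, g (k + c))
      = ∑ j ∈ Finset.Icc (a + c) (b + c), g j := by
    intro a b c
    rw [← Finset.map_add_right_Icc, Finset.sum_map]
    rfl
  -- range n sum equals Icc 0 (n-1) sum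
  have hrange : (∑ k ∈ Finset.range n, g (k : ℤ)) = ∑ j ∈ Finset.Icc (0 : ℤ) ((n : ℤ) - 1), g j := by
    rw [show Finset.Icc (0 : ℤ) ((n : ℤ) - 1)
        = (Finset.range n).map ⟨Nat.cast, Nat.cast_injective⟩ by
      ext x
      simp only [Finset.mem_Icc, Finset.mem_map, Finset.mem_range, Function.Embedding.coeFn_mk]
      constructor
      · rintro ⟨h0, h1⟩
        exact ⟨x.toNat, by omega, by omega⟩
      · rintro ⟨k, hk, rfl⟩
        exact ⟨by positivity, by omega⟩]
    rw [Finset.sum_map]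
    rfl
  -- rewrite everything
  simp only [hfcard]
  have hsq : (U.card ^ 2 * ∑ k ∈ Finset.range n, (V ∩ V.image ((k : ℤ) + ·)).card)
      = ∑ u ∈ U, ∑ u' ∈ U, ∑ j ∈ Finset.Icc (0 : ℤ) ((n : ℤ) - 1), g j := by
    rw [Finset.sum_const, Finset.sum_const, smul_eq_mul, smul_eq_mul, ← mul_assoc, ← sq,
      ← hrange]
  constructor
  · rw [Finset.sum_comm]
    rw [hsq]
    refine Finset.sum_le_sum fun u hu => ?_
    rw [Finset.sum_comm]
    refine Finset.sum_le_sum fun u' hu' => ?_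
    have h := hdiff u hu u' hu'
    calc (∑ k ∈ Finset.Icc M ((n : ℤ) - 1 - M), g (k + u' - u))
        = ∑ k ∈ Finset.Icc M ((n : ℤ) - 1 - M), g (k + (u' - u)) := by
          refine Finset.sum_congr rfl fun k _ => ?_
          congr 1; ring
      _ = ∑ j ∈ Finset.Icc (M + (u' - u)) ((n : ℤ) - 1 - M + (u' - u)), g j := hshift _ _ _
      _ ≤ ∑ j ∈ Finset.Icc (0 : ℤ) ((n : ℤ) - 1), g j :=
          Finset.sum_le_sum_of_subset (Finset.Icc_subset_Icc (by omega) (by omega))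
  · rw [hsq]
    conv_rhs => rw [Finset.sum_comm]
    refine Finset.sum_le_sum fun u hu => ?_
    conv_rhs => rw [Finset.sum_comm]
    refine Finset.sum_le_sum fun u' hu' => ?_
    have h := hdiff u hu u' hu'
    calc (∑ j ∈ Finset.Icc (0 : ℤ) ((n : ℤ) - 1), g j)
        ≤ ∑ j ∈ Finset.Icc (-M + (u' - u)) ((n : ℤ) - 1 + M + (u' - u)), g j := by
          refine Finset.sum_le_sum_of_subset (Finset.Icc_subset_Icc (by omega) (by omega))
      _ = ∑ k ∈ Finset.Icc (-M) ((n : ℤ) - 1 + M), g (k + (u' - u)) := (hshift _ _ _).symm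
      _ = ∑ k ∈ Finset.Icc (-M) ((n : ℤ) - 1 + M), g (k + u' - u) := by
          refine Finset.sum_congr rfl fun k _ => ?_
          congr 1; ring
end

section
/- Let T be an invertible measure-preserving transformation of a σ-finite measure space and suppose T is subsequence weakly rationally ergodic: there is a sweep-out set F of positive finite measure and a sequence nᵢ → ∞ such that for all measurable A, B ⊆ F, (1/a_{nᵢ}(F)) ∑_{k=0}^{nᵢ} μ(A ∩ T^k B) → μ(A)μ(B). If S is an invertible nonsingular transformation commuting with T such that μ(S(A)) = c·μ(A) for all measurable A (some constant c > 0), and the subsequence weak rational ergodicity property also holds on the set F ∪ SF, then c = 1, i.e., S is measure-preserving. -/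
open MeasureTheory Filter

/-- `a_n(F) = ∑_{k<n} μ(F ∩ T^k F) / μ(F)²`. -/
noncomputable def aSum {X : Type*} [MeasurableSpace X] (μ : Measure X)
    (T : X → X) (F : Set X) (n : ℕ) : ℝ :=
  ∑ k ∈ Finset.range n, (μ (F ∩ T^[k] '' F)).toReal / (μ F).toReal ^ 2

/-- Subsequence weak rational ergodicity of `T` with respect to the set `F`
along the subsequence `ni`. -/
def SWRE {X : Type*} [MeasurableSpace X] (μ : Measure X)
    (T : X → X) (F : Set X) (ni : ℕ → ℕ) : Prop :=
  ∀ A B : Set X, MeasurableSet A → MeasurableSet B → A ⊆ F → B ⊆ F →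
    Tendsto (fun i =>
        (∑ k ∈ Finset.range (ni i + 1), (μ (A ∩ T^[k] '' B)).toReal) / aSum μ T F (ni i))
      atTop (nhds ((μ A).toReal * (μ B).toReal))

/-!
Write `R_E(n) = ∑_{k<n} μ(E ∩ T^k E)`. Weak rational ergodicity on `F` gives
`R_D / R_F → 1` for every measurable `D ⊆ F` with `μ D = μ F`, and on `F ∪ SF` it gives
`R_{SD} / R_F → μ(SD)² / μ(F)² = c²`. Since `S` commutes with `T` and scales `μ` by `c`,
`R_{SD} = c R_D`, so the second ratio also tends to `c`; hence `c² = c`.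
The set `SF` need not be measurable, so `D` is chosen with `SD` measurable: this is possible
because `SF` is null-measurable.
-/

theorem Filter.Tendsto.div_of_common_denom {ι K : Type*} [Field K] [TopologicalSpace K]
    [T1Space K] [ContinuousInv₀ K] [ContinuousMul K] {l : Filter ι} {u v a : ι → K} {L M : K}
    (hu : Tendsto (fun i => u i / a i) l (nhds L)) (hv : Tendsto (fun i => v i / a i) l (nhds M))
    (hL : L ≠ 0) : Tendsto (fun i => v i / u i) l (nhds (M / L)) := by
  refine (hv.div hu hL).congr' ?_
  filter_upwards [hu.eventually_ne hL] with i hi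
  have ha : a i ≠ 0 := fun ha => hi (by rw [ha, div_zero])
  exact div_div_div_cancel_right₀ ha (v i) (u i)

namespace MeasureTheory

variable {X : Type*} [MeasurableSpace X] {μ : Measure X} {S : X → X} {c : ENNReal}

theorem measure_image_eq_mul_of_measurableSet (hSm : Measurable S)
    (hSs : Function.Surjective S) (h : ∀ A, MeasurableSet A → μ (S '' A) = c * μ A)
    (W : Set X) : μ (S '' W) = c * μ W := by
  apply le_antisymm
  · calc μ (S '' W) ≤ μ (S '' toMeasurable μ W) :=
          measure_mono (Set.image_mono (subset_toMeasurable _ _))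
      _ = c * μ W := by rw [h _ (measurableSet_toMeasurable _ _), measure_toMeasurable]
  · set N := toMeasurable μ (S '' W)
    have hWN : W ⊆ S ⁻¹' N := fun x hx => subset_toMeasurable _ _ ⟨x, hx, rfl⟩
    calc c * μ W ≤ c * μ (S ⁻¹' N) := by gcongr
      _ = μ (S '' W) := by
        rw [← h _ ((measurableSet_toMeasurable _ _).preimage hSm),
          Set.image_preimage_eq _ hSs, measure_toMeasurable]

theorem nullMeasurableSet_image_of_measure_image_eq_mul
    (hS : Function.Bijective S) (h : ∀ W, μ (S '' W) = c * μ W) (hc0 : c ≠ 0) (hctop : c ≠ ⊤)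
    {F : Set X} (hF : MeasurableSet F) (hFfin : μ F ≠ ⊤) : NullMeasurableSet (S '' F) μ := by
  set N := toMeasurable μ (S '' F)
  have hFN : F ⊆ S ⁻¹' N := fun x hx => subset_toMeasurable _ _ ⟨x, hx, rfl⟩
  have hμN : μ (S ⁻¹' N) = μ F := by
    rw [← ENNReal.mul_right_inj hc0 hctop, ← h, ← h, Set.image_preimage_eq _ hS.2,
      measure_toMeasurable]
  have hF_ae : F =ᵐ[μ] S ⁻¹' N :=
    ae_eq_of_subset_of_measure_ge hFN hμN.le hF.nullMeasurableSet (hμN ▸ hFfin)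
  have hN_diff : μ (N \ S '' F) = 0 := by
    rw [← Set.image_preimage_eq N hS.2, ← Set.image_sdiff hS.1, h, (ae_eq_set.1 hF_ae).2,
      mul_zero]
  have hSF_ae : N =ᵐ[μ] S '' F := by
    refine ae_eq_set.2 ⟨hN_diff, ?_⟩
    rw [Set.sdiff_eq_empty.2 (subset_toMeasurable _ _), measure_empty]
  exact (measurableSet_toMeasurable μ _).nullMeasurableSet.congr hSF_ae

theorem exists_measurableSet_subset_measurableSet_image (hSm : Measurable S)
    (hS : Function.Bijective S) (h : ∀ W, μ (S '' W) = c * μ W) (hc0 : c ≠ 0) (hctop : c ≠ ⊤)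
    {F : Set X} (hF : MeasurableSet F) (hFfin : μ F ≠ ⊤) :
    ∃ D ⊆ F, MeasurableSet D ∧ MeasurableSet (S '' D) ∧ μ D = μ F := by
  obtain ⟨K, hKF, hK, hK_ae⟩ := (nullMeasurableSet_image_of_measure_image_eq_mul hS h hc0 hctop
    hF hFfin).exists_measurable_subset_ae_eq
  have hSK : S '' (S ⁻¹' K) = K := Set.image_preimage_eq K hS.2
  refine ⟨S ⁻¹' K, ?_, hK.preimage hSm, by rwa [hSK], ?_⟩
  · rwa [← Set.image_subset_image_iff hS.1, hSK]
  · rw [← ENNReal.mul_right_inj hc0 hctop, ← h, ← h, hSK, measure_congr hK_ae]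

end MeasureTheory

noncomputable def returnSum {X : Type*} [MeasurableSpace X] (μ : Measure X) (T : X → X)
    (E : Set X) (n : ℕ) : ℝ :=
  ∑ k ∈ Finset.range n, (μ (E ∩ T^[k] '' E)).toReal

theorem returnSum_image {X : Type*} [MeasurableSpace X] {μ : Measure X} {T S : X → X}
    {c : ENNReal} (hS : Function.Injective S) (hST : Function.Commute S T)
    (h : ∀ W, μ (S '' W) = c * μ W) (E : Set X) (n : ℕ) :
    returnSum μ T (S '' E) n = c.toReal * returnSum μ T E n := by
  rw [returnSum, returnSum, Finset.mul_sum]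
  refine Finset.sum_congr rfl fun k _ => ?_
  rw [← (hST.iterate_right k).set_image E, ← Set.image_inter hS, h, ENNReal.toReal_mul]

theorem SWRE.tendsto_returnSum_div {X : Type*} [MeasurableSpace X] {μ : Measure X}
    {T : X → X} {G : Set X} {ni : ℕ → ℕ} (h : SWRE μ T G ni) {E E' : Set X}
    (hE : MeasurableSet E) (hE' : MeasurableSet E') (hEG : E ⊆ G) (hE'G : E' ⊆ G)
    (hE'0 : μ E' ≠ 0) (hE'top : μ E' ≠ ⊤) :
    Tendsto (fun i => returnSum μ T E (ni i + 1) / returnSum μ T E' (ni i + 1)) atTop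
      (nhds ((μ E).toReal * (μ E).toReal / ((μ E').toReal * (μ E').toReal))) := by
  have hpos : 0 < (μ E').toReal := ENNReal.toReal_pos hE'0 hE'top
  exact (h E' E' hE' hE' hE'G hE'G).div_of_common_denom (h E E hE hE hEG hEG) (by positivity)

theorem stmt_3_general {X : Type*} [MeasurableSpace X] (μ : Measure X)
    (T S : X → X)
    (hSmeas : Measurable S) (hSbij : Function.Bijective S)
    (hcomm : S ∘ T = T ∘ S)
    (c : ℝ) (hc : 0 < c)
    (hSc : ∀ A : Set X, MeasurableSet A → μ (S '' A) = ENNReal.ofReal c * μ A)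
    (F : Set X) (hF : MeasurableSet F) (hF0 : 0 < μ F) (hFfin : μ F < ⊤)
    (ni : ℕ → ℕ)
    (h1 : SWRE μ T F ni) (h2 : SWRE μ T (F ∪ S '' F) ni) :
    c = 1 := by
  have hc0 : ENNReal.ofReal c ≠ 0 := (ENNReal.ofReal_pos.2 hc).ne'
  have hScale := measure_image_eq_mul_of_measurableSet hSmeas hSbij.2 hSc
  obtain ⟨D, hDF, hD, hSD, hμD⟩ := exists_measurableSet_subset_measurableSet_image hSmeas hSbij
    hScale hc0 ENNReal.ofReal_ne_top hF hFfin.ne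
  have hf : (μ F).toReal ≠ 0 := (ENNReal.toReal_pos hF0.ne' hFfin.ne).ne'
  have hD_ratio := h1.tendsto_returnSum_div hD hF hDF subset_rfl hF0.ne' hFfin.ne
  have hSD_ratio := h2.tendsto_returnSum_div hSD hF
    ((Set.image_mono hDF).trans Set.subset_union_right) Set.subset_union_left hF0.ne' hFfin.ne
  rw [hμD, div_self (mul_ne_zero hf hf)] at hD_ratio
  simp only [returnSum_image hSbij.1 (congrFun hcomm) hScale, hScale, hμD, ENNReal.toReal_mul,
    ENNReal.toReal_ofReal hc.le] at hSD_ratio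
  have hc_sq : c * (μ F).toReal * (c * (μ F).toReal) / ((μ F).toReal * (μ F).toReal) = c * 1 :=
    tendsto_nhds_unique hSD_ratio
      ((hD_ratio.const_mul c).congr fun i => (mul_div_assoc _ _ _).symm)
  field_simp at hc_sq
  exact hc_sq

/-- If `T` is subsequence weakly rationally ergodic and `S` is an invertible nonsingular
transformation commuting with `T` with `μ(S A) = c μ(A)`, and the subsequence weak rational
ergodicity property also holds on `F ∪ S F`, then `c = 1`, i.e. `S` is measure-preserving. -/
theorem stmt_3 {X : Type*} [MeasurableSpace X] (μ : Measure X) [SigmaFinite μ]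
    (T S : X → X) (hT : MeasurePreserving T μ μ) (hTbij : Function.Bijective T)
    (hSmeas : Measurable S) (hSbij : Function.Bijective S)
    (hcomm : S ∘ T = T ∘ S)
    (c : ℝ) (hc : 0 < c)
    (hSc : ∀ A : Set X, MeasurableSet A → μ (S '' A) = ENNReal.ofReal c * μ A)
    (F : Set X) (hF : MeasurableSet F) (hF0 : 0 < μ F) (hFfin : μ F < ⊤)
    (hsweep : μ (Set.univ \ ⋃ n : ℕ, T^[n] ⁻¹' F) = 0)
    (ni : ℕ → ℕ) (hni : Tendsto ni atTop atTop)
    (h1 : SWRE μ T F ni) (h2 : SWRE μ T (F ∪ S '' F) ni) :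
    c = 1 :=
  stmt_3_general μ T S hSmeas hSbij hcomm c hc hSc F hF hF0 hFfin ni h1 h2
end

section
/- Let T be a measure-preserving transformation and I a set of positive finite measure. Suppose that for a fixed n ∈ ℕ and constant c > 0, the inequality (1/a_n(I)) ∑_{k=0}^{n−1} μ(I ∩ T^k B) ≤ c·μ(B) holds for all measurable B ⊆ I. Suppose further (rank-one structure) that for every x ∈ I there exist levels J ∋ x of arbitrarily small measure, each J satisfying: (1/a_n(I)) ∑_{k=0}^{n−1} 1_I(T^k x) = (1/a_n(I)) ∑_{k=0}^{n−1} μ(I ∩ T^k J)/μ(J). Then ‖(1/a_n(I)) S_n(1_I)‖_∞ ≤ c, where S_n(1_I) = ∑_{k=0}^{n−1} 1_I ∘ T^k. -/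
/-!
If `B ⊆ I` is carried into `I` by `T^k` for more than `c * a` of the times `k < n`, each of
these times contributes at least `μ B` to `∑ k < n, μ (I ∩ T^k B)`, so the correlation bound
forces `μ B = 0`. A point whose orbit meets `I` more than `c * a` times before `n` reaches,
at its first visit, a point of `I` with at least as many visits, i.e. a point of such a null
set `B`; as `T` preserves `μ`, these points form a null set, and off it `S_n(1_I) ≤ c * a`.
-/

open MeasureTheory Finset

section

variable {X : Type*}

open scoped Classical in
noncomputable def visitTimes (T : X → X) (I : Set X) (n : ℕ) (x : X) : Finset ℕ :=
  {k ∈ range n | T^[k] x ∈ I}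

lemma mem_visitTimes {T : X → X} {I : Set X} {n k : ℕ} {x : X} :
    k ∈ visitTimes T I n x ↔ k < n ∧ T^[k] x ∈ I := by
  simp [visitTimes]

lemma sum_indicator_iterate_eq_card_visitTimes (T : X → X) (I : Set X) (n : ℕ) (x : X) :
    ∑ k ∈ range n, I.indicator (fun _ => (1 : ℝ)) (T^[k] x) = #(visitTimes T I n x) := by
  classical
  simp [visitTimes, Set.indicator_apply, sum_boole]

/-- Restarting the orbit at its first visit to `I` loses no visit times. -/
lemma exists_iterate_mem_card_visitTimes_le {T : X → X} {I : Set X} {n : ℕ} {x : X}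
    (hx : (visitTimes T I n x).Nonempty) :
    ∃ j < n, T^[j] x ∈ I ∧ #(visitTimes T I n x) ≤ #(visitTimes T I n (T^[j] x)) := by
  set V := visitTimes T I n x
  have hV : ∀ k ∈ V, k < n ∧ T^[k] x ∈ I := fun k hk => mem_visitTimes.1 hk
  set j := V.min' hx
  obtain ⟨hjn, hjI⟩ := hV j (V.min'_mem hx)
  refine ⟨j, hjn, hjI, ?_⟩
  have hshift : Set.MapsTo (· - j) V (visitTimes T I n (T^[j] x)) := by
    intro k hk
    obtain ⟨hkn, hkI⟩ := hV k hk
    have hjk : j ≤ k := V.min'_le k hk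
    refine mem_visitTimes.2 ⟨show k - j < n by omega, ?_⟩
    rwa [← Function.iterate_add_apply, Nat.sub_add_cancel hjk]
  refine card_le_card_of_injOn _ hshift fun k₁ h₁ k₂ h₂ h => ?_
  have := V.min'_le k₁ h₁
  have := V.min'_le k₂ h₂
  have h : k₁ - j = k₂ - j := h
  omega

def returnSet (T : X → X) (I : Set X) (K : Finset ℕ) : Set X :=
  I ∩ ⋂ k ∈ K, T^[k] ⁻¹' I

lemma mem_returnSet_visitTimes {T : X → X} {I : Set X} {n : ℕ} {y : X} (hy : y ∈ I) :
    y ∈ returnSet T I (visitTimes T I n y) :=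
  ⟨hy, Set.mem_iInter₂.2 fun _ hk => (mem_visitTimes.1 hk).2⟩

variable [MeasurableSpace X] {μ : Measure X}

lemma measurableSet_returnSet {T : X → X} (hT : Measurable T) {I : Set X}
    (hI : MeasurableSet I) (K : Finset ℕ) : MeasurableSet (returnSet T I K) :=
  hI.inter (measurableSet_biInter _ fun k _ => hT.iterate k hI)

lemma MeasureTheory.MeasurePreserving.measure_le_measure_image {T : X → X}
    (hT : MeasurePreserving T μ μ) (B : Set X) : μ B ≤ μ (T '' B) := by
  simpa [hT.map_eq] using Measure.le_map_apply_image hT.aemeasurable B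

lemma measure_eq_zero_of_card_gt {T : X → X} (hT : MeasurePreserving T μ μ) {I B : Set X}
    (hIfin : μ I < ⊤) (hBI : B ⊆ I) {n : ℕ} {a c : ℝ} (ha : 0 < a)
    (hbound : (∑ k ∈ range n, (μ (I ∩ T^[k] '' B)).toReal) / a ≤ c * (μ B).toReal)
    {K : Finset ℕ} (hK : K ⊆ range n) (hKI : ∀ k ∈ K, T^[k] '' B ⊆ I) (hcard : c * a < #K) :
    μ B = 0 := by
  have hfin : ∀ {s}, s ⊆ I → μ s ≠ ⊤ := fun hs => ((measure_mono hs).trans_lt hIfin).ne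
  have hterm : ∀ k ∈ K, (μ B).toReal ≤ (μ (I ∩ T^[k] '' B)).toReal := fun k hk => by
    rw [Set.inter_eq_right.2 (hKI k hk)]
    exact ENNReal.toReal_mono (hfin (hKI k hk)) ((hT.iterate k).measure_le_measure_image B)
  have hsum : #K * (μ B).toReal ≤ ∑ k ∈ range n, (μ (I ∩ T^[k] '' B)).toReal :=
    calc #K * (μ B).toReal = #K • (μ B).toReal := (nsmul_eq_mul _ _).symm
      _ ≤ ∑ k ∈ K, (μ (I ∩ T^[k] '' B)).toReal := card_nsmul_le_sum K _ _ hterm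
      _ ≤ _ := sum_le_sum_of_subset_of_nonneg hK fun _ _ _ => ENNReal.toReal_nonneg
  rw [div_le_iff₀ ha] at hbound
  have hB : (μ B).toReal = 0 := by
    by_contra hB
    have hBpos : 0 < (μ B).toReal := lt_of_le_of_ne ENNReal.toReal_nonneg (Ne.symm hB)
    nlinarith
  exact (ENNReal.toReal_eq_zero_iff _).1 hB |>.resolve_right (hfin hBI)

lemma ae_card_visitTimes_le {T : X → X} (hT : MeasurePreserving T μ μ) {I : Set X}
    (hI : MeasurableSet I) (hIfin : μ I < ⊤) {n : ℕ} {a c : ℝ} (ha : 0 < a) (hc : 0 ≤ c)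
    (hbound : ∀ B : Set X, MeasurableSet B → B ⊆ I →
      (∑ k ∈ range n, (μ (I ∩ T^[k] '' B)).toReal) / a ≤ c * (μ B).toReal) :
    ∀ᵐ x ∂μ, (#(visitTimes T I n x) : ℝ) ≤ c * a := by
  set E := {y ∈ I | c * a < #(visitTimes T I n y)}
  have hE : μ E = 0 := by
    classical
    let bad : Finset (Finset ℕ) := {K ∈ (range n).powerset | c * a < #K}
    have hsub : E ⊆ ⋃ K ∈ bad, returnSet T I K := fun y ⟨hyI, hy⟩ =>
      Set.mem_iUnion₂.2 ⟨_, mem_filter.2 ⟨mem_powerset.2 fun _ hk => mem_range.2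
        (mem_visitTimes.1 hk).1, hy⟩, mem_returnSet_visitTimes hyI⟩
    refine measure_mono_null hsub <| (measure_biUnion_null_iff bad.countable_toSet).2 ?_
    intro K hK
    obtain ⟨hKn, hcard⟩ := mem_filter.1 hK
    refine measure_eq_zero_of_card_gt hT hIfin Set.inter_subset_left ha
      (hbound _ (measurableSet_returnSet hT.measurable hI K) Set.inter_subset_left)
      (mem_powerset.1 hKn) ?_ hcard
    rintro k hk _ ⟨y, hy, rfl⟩
    exact Set.mem_iInter₂.1 hy.2 k hk
  have hnull : μ (⋃ j ∈ range n, T^[j] ⁻¹' E) = 0 :=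
    (measure_biUnion_null_iff (range n).countable_toSet).2 fun j _ =>
      (hT.iterate j).quasiMeasurePreserving.preimage_null hE
  filter_upwards [measure_eq_zero_iff_ae_notMem.1 hnull] with x hx
  by_contra! hgt
  have hne : (visitTimes T I n x).Nonempty := card_pos.1 <| by
    exact_mod_cast (mul_nonneg hc ha.le).trans_lt hgt
  obtain ⟨j, hjn, hjI, hle⟩ := exists_iterate_mem_card_visitTimes_le hne
  exact hx <| Set.mem_iUnion₂.2
    ⟨j, mem_range.2 hjn, hjI, hgt.trans_le (by exact_mod_cast hle)⟩

end

theorem stmt_8_general {X : Type*} [MeasurableSpace X] (μ : Measure X)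
    (T : X → X) (hT : MeasurePreserving T μ μ)
    (I : Set X) (hI : MeasurableSet I) (hIfin : μ I < ⊤)
    (n : ℕ) (c : ℝ) (hc : 0 < c)
    (a : ℝ) (ha : a = ∑ k ∈ Finset.range n, (μ (I ∩ T^[k] '' I)).toReal / (μ I).toReal ^ 2)
    (hbound : ∀ B : Set X, MeasurableSet B → B ⊆ I →
      (∑ k ∈ Finset.range n, (μ (I ∩ T^[k] '' B)).toReal) / a ≤ c * (μ B).toReal) :
    eLpNorm (fun x =>
        (∑ k ∈ Finset.range n, Set.indicator I (fun _ => (1 : ℝ)) (T^[k] x)) / a) ⊤ μ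
      ≤ ENNReal.ofReal c := by
  rw [eLpNorm_exponent_top]
  refine eLpNormEssSup_le_of_ae_bound ?_
  have ha_nonneg : 0 ≤ a := ha ▸ sum_nonneg fun _ _ => by positivity
  obtain rfl | ha_pos := ha_nonneg.eq_or_lt
  · exact ae_of_all _ fun x => by simpa using hc.le
  filter_upwards [ae_card_visitTimes_le hT hI hIfin ha_pos hc.le hbound] with x hx
  rw [sum_indicator_iterate_eq_card_visitTimes, Real.norm_of_nonneg (by positivity),
    div_le_iff₀ ha_pos]
  exact hx

/-- If the normalized correlation sums of `I` against all `B ⊆ I` are bounded by `c·μ(B)`,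
and each `x ∈ I` lies in levels `J` of arbitrarily small measure for which the Birkhoff sum
at `x` equals the normalized intersection sum over `J`, then
`‖(1/a_n(I)) S_n(1_I)‖_∞ ≤ c`. -/
theorem stmt_8 {X : Type*} [MeasurableSpace X] (μ : Measure X)
    (T : X → X) (hT : MeasurePreserving T μ μ)
    (I : Set X) (hI : MeasurableSet I) (hI0 : 0 < μ I) (hIfin : μ I < ⊤)
    (n : ℕ) (c : ℝ) (hc : 0 < c)
    (a : ℝ) (ha : a = ∑ k ∈ Finset.range n, (μ (I ∩ T^[k] '' I)).toReal / (μ I).toReal ^ 2)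
    (hbound : ∀ B : Set X, MeasurableSet B → B ⊆ I →
      (∑ k ∈ Finset.range n, (μ (I ∩ T^[k] '' B)).toReal) / a ≤ c * (μ B).toReal)
    (hlevel : ∀ x ∈ I, ∀ δ : ℝ, 0 < δ → ∃ J : Set X, MeasurableSet J ∧ x ∈ J ∧
      0 < μ J ∧ (μ J).toReal < δ ∧
      (∑ k ∈ Finset.range n, Set.indicator I (fun _ => (1 : ℝ)) (T^[k] x)) / a
        = (∑ k ∈ Finset.range n, (μ (I ∩ T^[k] '' J)).toReal / (μ J).toReal) / a) :
    eLpNorm (fun x =>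
        (∑ k ∈ Finset.range n, Set.indicator I (fun _ => (1 : ℝ)) (T^[k] x)) / a) ⊤ μ
      ≤ ENNReal.ofReal c :=
  stmt_8_general μ T hT I hI hIfin n c hc a ha hbound
end

section
/- If x, L are sequences/values such that a sequence (xₖ) satisfies strong Cesàro convergence to L with respect to weights (uₖ) along a subsequence κ (i.e., (1/a_u(n)) ∑_{k=0}^{n−1} uₖ|xₖ − L| → 0 along n ∈ κ, where a_u(n) = ∑_{k<n} uₖ and ∑ uₖ = ∞, uₖ ≥ 0), then xₖ → L in (u,κ)-density: there is a set K ⊆ ℕ with a_u(K ∩ [0,n−1])/a_u(n) → 0 along n ∈ κ such that xₖ → L for k ∉ K. -/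
/-!
Let `S i` be the `i`-th weighted Cesàro mean of `|x k - L|` and `h k` the supremum of those
`S i` with `k < κ i`; then `h k → 0` and `S i ≤ h k` whenever `k < κ i`. Take `K` to be the set
of `k` with `|x k - L| > √(h k)`. Off `K` we have `|x k - L| ≤ √(h k) → 0`, while on
`K ∩ [0, κ i)` the deviation exceeds `√(S i)`, so Markov's inequality bounds the weighted density
of `K` up to `κ i` by `S i / √(S i) = √(S i) → 0`.
-/

open Filter Topology

section WeightedMarkov

variable {ι : Type*} {s : Finset ι} {u f : ι → ℝ} {K : Set ι} {t : ℝ}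

theorem mul_sum_indicator_lt_sum_mul (hu : ∀ k ∈ s, 0 ≤ u k) (hf : ∀ k ∈ s, 0 ≤ f k)
    (hK : ∀ k ∈ s, k ∈ K → t < f k) (hA : ∑ k ∈ s, K.indicator u k ≠ 0) :
    t * ∑ k ∈ s, K.indicator u k < ∑ k ∈ s, u k * f k := by
  rw [Finset.mul_sum]
  obtain ⟨j, hjs, hj⟩ := Finset.exists_ne_zero_of_sum_ne_zero hA
  have hjK : j ∈ K := Set.mem_of_indicator_ne_zero hj
  rw [Set.indicator_of_mem hjK] at hj
  refine Finset.sum_lt_sum (fun k hk => ?_) ⟨j, hjs, ?_⟩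
  · by_cases hkK : k ∈ K
    · rw [Set.indicator_of_mem hkK, mul_comm]
      exact mul_le_mul_of_nonneg_left (hK k hk hkK).le (hu k hk)
    · rw [Set.indicator_of_notMem hkK, mul_zero]
      exact mul_nonneg (hu k hk) (hf k hk)
  · rw [Set.indicator_of_mem hjK, mul_comm]
    exact mul_lt_mul_of_pos_left (hK j hjs hjK) ((hu j hjs).lt_of_ne' hj)

theorem sum_indicator_div_sum_le_sqrt (hu : ∀ k ∈ s, 0 ≤ u k) (hf : ∀ k ∈ s, 0 ≤ f k)
    (hK : ∀ k ∈ s, k ∈ K → √((∑ k ∈ s, u k * f k) / ∑ k ∈ s, u k) < f k) :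
    (∑ k ∈ s, K.indicator u k) / ∑ k ∈ s, u k ≤
      √((∑ k ∈ s, u k * f k) / ∑ k ∈ s, u k) := by
  set B := ∑ k ∈ s, u k
  set C := ∑ k ∈ s, u k * f k
  set A := ∑ k ∈ s, K.indicator u k
  set r := √(C / B)
  have hC : 0 ≤ C := Finset.sum_nonneg fun k hk => mul_nonneg (hu k hk) (hf k hk)
  have hB : 0 ≤ B := Finset.sum_nonneg hu
  rcases hB.eq_or_lt with hB0 | hBpos
  · rw [← hB0, div_zero]
    exact Real.sqrt_nonneg _
  have hrr : r * r * B = C := by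
    rw [Real.mul_self_sqrt (div_nonneg hC hB), div_mul_cancel₀ C hBpos.ne']
  rw [div_le_iff₀ hBpos]
  -- otherwise Markov at level `r` gives `r * A < C = r * (r * B) ≤ r * A`
  by_contra! hlt
  have hmarkov := mul_sum_indicator_lt_sum_mul hu hf hK
    ((mul_nonneg (Real.sqrt_nonneg _) hB).trans_lt hlt).ne'
  nlinarith [mul_nonneg (Real.sqrt_nonneg (C / B)) (sub_nonneg.2 hlt.le)]

end WeightedMarkov

section TailSup

-- `0` when no `κ j` exceeds `k`, since `sSup ∅ = 0` in `ℝ`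
noncomputable def tailSup (S : ℕ → ℝ) (κ : ℕ → ℕ) (k : ℕ) : ℝ :=
  sSup (S '' {j | k < κ j})

variable {S : ℕ → ℝ} {κ : ℕ → ℕ}

theorem le_tailSup (hS : BddAbove (Set.range S)) {j k : ℕ} (hjk : k < κ j) :
    S j ≤ tailSup S κ k :=
  le_csSup (hS.mono (Set.image_subset_range S _)) ⟨j, hjk, rfl⟩

theorem tailSup_nonneg (hS : ∀ j, 0 ≤ S j) (k : ℕ) : 0 ≤ tailSup S κ k :=
  Real.sSup_nonneg (by rintro _ ⟨j, -, rfl⟩; exact hS j)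

theorem tendsto_tailSup_zero (hS : ∀ j, 0 ≤ S j) (hS0 : Tendsto S atTop (𝓝 0)) :
    Tendsto (tailSup S κ) atTop (𝓝 0) := by
  rw [Metric.tendsto_atTop]
  intro ε hε
  obtain ⟨N, hN⟩ := Metric.tendsto_atTop.1 hS0 (ε / 2) (half_pos hε)
  -- beyond every `κ j` with `j < N`, only the indices `j ≥ N` contribute to the supremum
  refine ⟨(Finset.range N).sup κ, fun k hk => ?_⟩
  have hle : tailSup S κ k ≤ ε / 2 := by
    refine Real.sSup_le ?_ (half_pos hε).le
    rintro _ ⟨j, hj, rfl⟩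
    have hjN : N ≤ j := by
      by_contra! hjN
      exact (Finset.le_sup (Finset.mem_range.2 hjN)).trans hk |>.not_gt hj
    simpa [Real.dist_eq, abs_of_nonneg (hS j)] using (hN j hjN).le
  rw [Real.dist_eq, sub_zero, abs_of_nonneg (tailSup_nonneg hS k)]
  linarith

end TailSup

theorem stmt_11_general (u x : ℕ → ℝ) (L : ℝ) (κ : ℕ → ℕ)
    (hu : ∀ k, 0 ≤ u k)
    (hsC : Tendsto (fun i =>
        (∑ k ∈ Finset.range (κ i), u k * |x k - L|) / ∑ k ∈ Finset.range (κ i), u k)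
      atTop (nhds 0)) :
    ∃ K : Set ℕ,
      Tendsto (fun i =>
          (∑ k ∈ Finset.range (κ i), Set.indicator K u k) / ∑ k ∈ Finset.range (κ i), u k)
        atTop (nhds 0) ∧
      ∀ ε : ℝ, 0 < ε → ∃ N, ∀ k, N ≤ k → k ∉ K → |x k - L| < ε := by
  set S : ℕ → ℝ := fun i =>
    (∑ k ∈ Finset.range (κ i), u k * |x k - L|) / ∑ k ∈ Finset.range (κ i), u k
  have hS : ∀ i, 0 ≤ S i := fun i =>
    div_nonneg (Finset.sum_nonneg fun k _ => mul_nonneg (hu k) (abs_nonneg _))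
      (Finset.sum_nonneg fun k _ => hu k)
  refine ⟨{k | √(tailSup S κ k) < |x k - L|}, ?_, fun ε hε => ?_⟩
  · refine squeeze_zero (fun i => div_nonneg ?_ (Finset.sum_nonneg fun k _ => hu k))
      (fun i => sum_indicator_div_sum_le_sqrt (fun k _ => hu k) (fun k _ => abs_nonneg _)
        fun k hk hkK => ?_) (by simpa using hsC.sqrt)
    · exact Finset.sum_nonneg fun k _ => Set.indicator_nonneg (fun k _ => hu k) k
    · exact (Real.sqrt_le_sqrt (le_tailSup hsC.bddAbove_range (Finset.mem_range.1 hk))).trans_lt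
        hkK
  · obtain ⟨N, hN⟩ := eventually_atTop.1 <|
      (by simpa using (tendsto_tailSup_zero hS hsC).sqrt :
        Tendsto (fun k => √(tailSup S κ k)) atTop (𝓝 0)).eventually (gt_mem_nhds hε)
    exact ⟨N, fun k hk hkK => (not_lt.1 hkK).trans_lt (hN k hk)⟩

/-- Weighted strong Cesàro convergence along a subsequence `κ` implies convergence in
`(u,κ)`-density: there is a `(u,κ)`-small set `K` off which `xₖ → L`. -/
theorem stmt_11 (u x : ℕ → ℝ) (L : ℝ) (κ : ℕ → ℕ)
    (hκ : Tendsto κ atTop atTop)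
    (hu : ∀ k, 0 ≤ u k)
    (hdiv : Tendsto (fun n => ∑ k ∈ Finset.range n, u k) atTop atTop)
    (hsC : Tendsto (fun i =>
        (∑ k ∈ Finset.range (κ i), u k * |x k - L|) / ∑ k ∈ Finset.range (κ i), u k)
      atTop (nhds 0)) :
    ∃ K : Set ℕ,
      Tendsto (fun i =>
          (∑ k ∈ Finset.range (κ i), Set.indicator K u k) / ∑ k ∈ Finset.range (κ i), u k)
        atTop (nhds 0) ∧
      ∀ ε : ℝ, 0 < ε → ∃ N, ∀ k, N ≤ k → k ∉ K → |x k - L| < ε :=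
  stmt_11_general u x L κ hu hsC
end

section
/- Let Hᵢ (0 ≤ i ≤ N−1) be finite sets of integers containing 0 and having the unique-difference-representation property: ∑(dᵢ − dᵢ') = ∑(eᵢ − eᵢ') with dᵢ, dᵢ', eᵢ, eᵢ' ∈ Hᵢ implies dᵢ − dᵢ' = eᵢ − eᵢ' for all i. Fix j < N and set D_J = H_j ⊕ … ⊕ H_{N−1} and D_I = H₀ ⊕ … ⊕ H_{N−1} (iterated sumsets, which have cardinality ∏|Hᵢ| by unique representation). Then for any integer k with |D_J ∩ (k + D_J)| > 0, one has |D_J ∩ (k + D_J)| / |D_I ∩ (k + D_I)| = 1 / ∏_{i=0}^{j−1} |Hᵢ|. -/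
/-!
Unique difference representation says exactly that summation is injective on tuples `(cᵢ)` with
`cᵢ ∈ Hᵢ - Hᵢ`. Write `D_I = P + D_J` with `P = H₀ ⊕ ⋯ ⊕ H_{j-1}`. Then `P - P` and `D_J - D_J`
are sum-independent, so for `k ∈ D_J - D_J` a point `p + q` of `D_I` (with `p ∈ P`, `q ∈ D_J`)
lies in `k + D_I` exactly when `q ∈ k + D_J`. Hence `|D_I ∩ (k + D_I)| = |P| · |D_J ∩ (k + D_J)|`,
and `|P| = ∏_{i<j} |Hᵢ|` by the same independence.
-/

open Pointwise

/-- The iterated sumset `H a ⊕ H (a+1) ⊕ … ⊕ H (a+n-1)`. -/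
def sumsetFrom (H : ℕ → Finset ℤ) : ℕ → ℕ → Finset ℤ
  | _, 0 => {0}
  | a, n + 1 => sumsetFrom H a n + H (a + n)

open Finset

theorem sumsetFrom_eq_sum (H : ℕ → Finset ℤ) (a n : ℕ) :
    sumsetFrom H a n = ∑ i ∈ Ico a (a + n), H i := by
  induction n with
  | zero => rw [sumsetFrom, add_zero, Ico_self, sum_empty]; rfl
  | succ n ih => rw [sumsetFrom, ih, ← add_assoc, sum_Ico_succ_top (Nat.le_add_right a n)]

section UniqueSumRep

variable {ι G : Type*} [AddCommGroup G]

theorem Finset.mem_finsetSum [DecidableEq G] (s : Finset ι) (K : ι → Finset G) (x : G) :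
    x ∈ ∑ i ∈ s, K i ↔ ∃ c : ι → G, (∀ i ∈ s, c i ∈ K i) ∧ ∑ i ∈ s, c i = x := by
  rw [← Finset.mem_coe, Finset.coe_sum, Set.mem_finsetSum]
  exact ⟨fun ⟨c, hc, hx⟩ => ⟨c, fun _ hi => hc hi, hx⟩,
    fun ⟨c, hc, hx⟩ => ⟨c, fun hi => hc _ hi, hx⟩⟩

def UniqueSumRep (K : ι → Finset G) (s : Finset ι) : Prop :=
  ∀ c c' : ι → G, (∀ i ∈ s, c i ∈ K i) → (∀ i ∈ s, c' i ∈ K i) →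
    ∑ i ∈ s, c i = ∑ i ∈ s, c' i → ∀ i ∈ s, c i = c' i

variable {K : ι → Finset G} {s t u : Finset ι}

theorem UniqueSumRep.mono [DecidableEq ι] (hK : UniqueSumRep K s) (hts : t ⊆ s)
    (h0 : ∀ i ∈ s \ t, 0 ∈ K i) : UniqueSumRep K t := by
  intro c c' hc hc' hsum i hi
  have hext : ∀ c : ι → G, (∀ i ∈ t, c i ∈ K i) →
      (∀ i ∈ s, t.piecewise c 0 i ∈ K i) ∧ ∑ i ∈ s, t.piecewise c 0 i = ∑ i ∈ t, c i := by
    intro c hc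
    refine ⟨fun i hi => ?_, ?_⟩
    · by_cases hit : i ∈ t
      · simpa [hit] using hc i hit
      · simpa [hit] using h0 i (mem_sdiff.2 ⟨hi, hit⟩)
    · rw [sum_piecewise, inter_eq_right.2 hts]
      simp
  obtain ⟨hd, hdsum⟩ := hext c hc
  obtain ⟨hd', hd'sum⟩ := hext c' hc'
  simpa [hi] using hK _ _ hd hd' (by rw [hdsum, hd'sum, hsum]) i (hts hi)

theorem UniqueSumRep.of_sub [DecidableEq G] (hK : UniqueSumRep (fun i => K i - K i) s) :
    UniqueSumRep K s := by
  intro c c' hc hc' hsum i hi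
  have hzero : ∀ i ∈ s, (0 : G) ∈ K i - K i := fun i hi => by
    simpa using sub_mem_sub (hc i hi) (hc i hi)
  have := hK (c - c') 0 (fun i hi => sub_mem_sub (hc i hi) (hc' i hi)) hzero
    (by simp [sum_sub_distrib, hsum]) i hi
  exact sub_eq_zero.1 this

theorem UniqueSumRep.injOn_add [DecidableEq ι] [DecidableEq G] (hK : UniqueSumRep K (t ∪ u))
    (htu : Disjoint t u) :
    ((∑ i ∈ t, K i) ×ˢ (∑ i ∈ u, K i) : Set (G × G)).InjOn fun x => x.1 + x.2 := by
  rintro ⟨x, y⟩ ⟨hx, hy⟩ ⟨x', y'⟩ ⟨hx', hy'⟩ hxy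
  obtain ⟨a, ha, rfl⟩ := (mem_finsetSum _ _ _).1 hx
  obtain ⟨b, hb, rfl⟩ := (mem_finsetSum _ _ _).1 hy
  obtain ⟨a', ha', rfl⟩ := (mem_finsetSum _ _ _).1 hx'
  obtain ⟨b', hb', rfl⟩ := (mem_finsetSum _ _ _).1 hy'
  have hglue : ∀ a b : ι → G, (∀ i ∈ t, a i ∈ K i) → (∀ i ∈ u, b i ∈ K i) →
      (∀ i ∈ t ∪ u, t.piecewise a b i ∈ K i) ∧
        ∑ i ∈ t ∪ u, t.piecewise a b i = ∑ i ∈ t, a i + ∑ i ∈ u, b i := by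
    intro a b ha hb
    refine ⟨fun i hi => ?_, ?_⟩
    · by_cases hit : i ∈ t
      · simpa [hit] using ha i hit
      · simpa [hit] using hb i ((mem_union.1 hi).resolve_left hit)
    · rw [sum_piecewise, union_inter_cancel_left, union_sdiff_cancel_left htu]
  obtain ⟨hd, hdsum⟩ := hglue a b ha hb
  obtain ⟨hd', hd'sum⟩ := hglue a' b' ha' hb'
  have hcomp := hK _ _ hd hd' (by rw [hdsum, hd'sum]; exact hxy)
  have hta : ∀ i ∈ t, a i = a' i := fun i hi => by
    simpa [hi] using hcomp i (mem_union_left u hi)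
  have hub : ∀ i ∈ u, b i = b' i := fun i hi => by
    simpa [disjoint_right.1 htu hi] using hcomp i (mem_union_right t hi)
  simp only [Prod.mk.injEq]
  exact ⟨sum_congr rfl hta, sum_congr rfl hub⟩

theorem UniqueSumRep.card_sum [DecidableEq ι] [DecidableEq G] (hK : UniqueSumRep K s)
    (h0 : ∀ i ∈ s, 0 ∈ K i) :
    #(∑ i ∈ s, K i) = ∏ i ∈ s, #(K i) := by
  induction s using Finset.induction_on with
  | empty => simp
  | insert a s has ih =>
    have hs : UniqueSumRep K s :=
      hK.mono (subset_insert a s) fun i hi => h0 i (mem_sdiff.1 hi).1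
    have hsplit : UniqueSumRep K ({a} ∪ s) := by rwa [← insert_eq]
    rw [sum_insert has, prod_insert has, ← ih hs fun i hi => h0 i (mem_insert_of_mem hi)]
    simpa using card_add_iff.2 (hsplit.injOn_add (disjoint_singleton_left.2 has))

theorem uniqueSumRep_sub_of_forall [DecidableEq G] {H : ι → Finset G}
    (huniq : ∀ d d' e e' : ι → G,
      (∀ i ∈ s, d i ∈ H i) → (∀ i ∈ s, d' i ∈ H i) →
      (∀ i ∈ s, e i ∈ H i) → (∀ i ∈ s, e' i ∈ H i) →
      ∑ i ∈ s, (d i - d' i) = ∑ i ∈ s, (e i - e' i) →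
      ∀ i ∈ s, d i - d' i = e i - e' i) :
    UniqueSumRep (fun i => H i - H i) s := by
  intro c c' hc hc' hsum
  choose! d hd d' hd' hdd' using fun i hi => mem_sub.1 (hc i hi)
  choose! e he e' he' hee' using fun i hi => mem_sub.1 (hc' i hi)
  intro i hi
  rw [← hdd' i hi, ← hee' i hi]
  refine huniq d d' e e' hd hd' he he' ?_ i hi
  rwa [sum_congr rfl hdd', sum_congr rfl hee']

end UniqueSumRep

section Translates

variable {G : Type*} [AddCommGroup G] [DecidableEq G] {P Q : Finset G}

theorem eq_and_sub_eq_of_injOn_sub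
    (hPQ : ((P - P) ×ˢ (Q - Q) : Set (G × G)).InjOn fun x => x.1 + x.2)
    {p p' q q' r r' : G} (hp : p ∈ P) (hp' : p' ∈ P) (hq : q ∈ Q) (hq' : q' ∈ Q)
    (hr : r ∈ Q) (hr' : r' ∈ Q) (h : p + q - (p' + q') = r - r') :
    p = p' ∧ q - q' = r - r' := by
  have := hPQ (Set.mk_mem_prod (sub_mem_sub hp hp') (sub_mem_sub hq hq'))
    (Set.mk_mem_prod (sub_mem_sub hp hp) (sub_mem_sub hr hr'))
    (by simp only [sub_self, zero_add, ← h, add_sub_add_comm])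
  simp only [Prod.mk.injEq, sub_self, sub_eq_zero] at this
  exact this

theorem card_add_inter_image_add
    (hPQ : ((P - P) ×ˢ (Q - Q) : Set (G × G)).InjOn fun x => x.1 + x.2)
    {k : G} (hk : (Q ∩ Q.image (k + ·)).Nonempty) :
    #((P + Q) ∩ (P + Q).image (k + ·)) = #P * #(Q ∩ Q.image (k + ·)) := by
  obtain ⟨r, hr, r', hr', hrk⟩ : ∃ r ∈ Q, ∃ r' ∈ Q, k + r' = r := by
    obtain ⟨r, hr⟩ := hk
    simp only [mem_inter, mem_image] at hr
    exact ⟨r, hr.1, hr.2⟩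
  rw [← card_product]
  refine (card_bij (fun x _ => x.1 + x.2) ?_ ?_ ?_).symm
  · rintro ⟨p, q⟩ hpq
    simp only [mem_product, mem_inter, mem_image] at hpq ⊢
    obtain ⟨hp, hq, q', hq', rfl⟩ := hpq
    exact ⟨add_mem_add hp (by simpa using hq), p + q', add_mem_add hp hq',
      add_left_comm k p q'⟩
  · rintro ⟨p, q⟩ hpq ⟨p', q'⟩ hpq' h
    simp only [mem_product, mem_inter] at hpq hpq'
    obtain ⟨hpp', hqq'⟩ := eq_and_sub_eq_of_injOn_sub hPQ hpq.1 hpq'.1 hpq.2.1 hpq'.2.1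
      hpq.2.1 hpq.2.1 (by rw [h, sub_self, sub_self])
    exact Prod.ext hpp' (sub_right_injective hqq').symm
  · intro x hx
    simp only [mem_inter, mem_image] at hx
    obtain ⟨hx, y, hy, rfl⟩ := hx
    obtain ⟨p, hp, q, hq, hpq⟩ := mem_add.1 hx
    obtain ⟨p', hp', q', hq', rfl⟩ := mem_add.1 hy
    obtain ⟨rfl, hqq'⟩ := eq_and_sub_eq_of_injOn_sub hPQ hp hp' hq hq' hr hr'
      (by rw [hpq, ← hrk, add_sub_cancel_right, add_sub_cancel_right])
    refine ⟨(p, q), mem_product.2 ⟨hp, mem_inter.2 ⟨hq, mem_image.2 ⟨q', hq', ?_⟩⟩⟩, hpq⟩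
    rw [← hrk, add_sub_cancel_right] at hqq'
    exact (eq_add_of_sub_eq hqq').symm

end Translates

/-- With unique difference representation, for `D_J = H_j ⊕ … ⊕ H_{N-1}` and
`D_I = H_0 ⊕ … ⊕ H_{N-1}` and any `k` with `|D_J ∩ (k+D_J)| > 0`, the ratio
`|D_J ∩ (k+D_J)| / |D_I ∩ (k+D_I)|` equals `1 / ∏_{i<j} |H_i|`. -/
theorem stmt_13 (N j : ℕ) (hj : j < N) (H : ℕ → Finset ℤ)
    (h0 : ∀ i, i < N → (0 : ℤ) ∈ H i)
    (huniq : ∀ d d' e e' : ℕ → ℤ,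
      (∀ i, i < N → d i ∈ H i) → (∀ i, i < N → d' i ∈ H i) →
      (∀ i, i < N → e i ∈ H i) → (∀ i, i < N → e' i ∈ H i) →
      ∑ i ∈ Finset.range N, (d i - d' i) = ∑ i ∈ Finset.range N, (e i - e' i) →
      ∀ i, i < N → d i - d' i = e i - e' i)
    (k : ℤ)
    (DJ DI : Finset ℤ) (hDJ : DJ = sumsetFrom H j (N - j)) (hDI : DI = sumsetFrom H 0 N)
    (hk : 0 < (DJ ∩ DJ.image (k + ·)).card) :
    ((DJ ∩ DJ.image (k + ·)).card : ℝ) / ((DI ∩ DI.image (k + ·)).card : ℝ)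
      = 1 / ∏ i ∈ Finset.range j, ((H i).card : ℝ) := by
  subst hDJ hDI
  have hdiff : UniqueSumRep (fun i => H i - H i) (range N) :=
    uniqueSumRep_sub_of_forall (by simpa only [mem_range] using huniq)
  rw [sumsetFrom_eq_sum, Nat.add_sub_cancel' hj.le] at hk ⊢
  rw [sumsetFrom_eq_sum, zero_add, ← range_eq_Ico, ← sum_range_add_sum_Ico _ hj.le]
  have hind : (((∑ i ∈ range j, H i) - ∑ i ∈ range j, H i) ×ˢ
      ((∑ i ∈ Ico j N, H i) - ∑ i ∈ Ico j N, H i) : Set (ℤ × ℤ)).InjOn fun x => x.1 + x.2 := by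
    rw [← sum_sub_distrib, ← sum_sub_distrib, range_eq_Ico]
    refine UniqueSumRep.injOn_add ?_ (Ico_disjoint_Ico_consecutive 0 j N)
    rwa [Ico_union_Ico_eq_Ico (Nat.zero_le j) hj.le, ← range_eq_Ico]
  have hcard : #(∑ i ∈ range j, H i) = ∏ i ∈ range j, #(H i) :=
    (hdiff.of_sub.mono (range_subset_range.2 hj.le) fun i hi =>
      h0 i (mem_range.1 (mem_sdiff.1 hi).1)).card_sum fun i hi => h0 i ((mem_range.1 hi).trans hj)
  rw [card_add_inter_image_add hind (card_pos.1 hk), Nat.cast_mul, hcard, Nat.cast_prod,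
    div_mul_cancel_right₀ (by exact_mod_cast hk.ne'), one_div]
end

section
/- Unique difference representation for the sets Hₙ = {0} ∪ {j·5^{n(n+1)/2} : 1 ≤ j ≤ ⌈√n⌉} ∪ {5^{n(n+1)/2 + m} : ⌈√n⌉ ≤ m ≤ n}: if ∑_{i=0}^{N−1}(dᵢ − dᵢ') = ∑_{i=0}^{N−1}(eᵢ − eᵢ') with dᵢ, dᵢ', eᵢ, eᵢ' ∈ Hᵢ, then dᵢ − dᵢ' = eᵢ − eᵢ' for every i. -/
/-!
Every element of `Hₙ` lies in `[0, 5^{T n + n}]` and is a multiple of `5^{T n}`, where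
`T n = n(n+1)/2`. Hence the discrepancy `fᵢ = (dᵢ - dᵢ') - (eᵢ - eᵢ')` is a multiple of `5^{T i}`
with `|fᵢ| ≤ 2·5^{T i + i}`, and these bounds grow so fast that `∑_{j<i} 2·5^{T j + j} < 5^{T i}`.
If `∑ fᵢ = 0`, the last nonzero term would be a nonzero multiple of `5^{T i}` cancelled by
strictly smaller earlier terms, which is impossible.
-/

/-- The sets `Hₙ = {0} ∪ {j·5^{n(n+1)/2} : 1 ≤ j ≤ ⌈√n⌉} ∪ {5^{n(n+1)/2+m} : ⌈√n⌉ ≤ m ≤ n}`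
from the multiply-recurrent zero-type construction. -/
noncomputable def Hset (n : ℕ) : Finset ℤ :=
  {0} ∪ (Finset.Icc 1 ⌈Real.sqrt n⌉₊).image (fun j : ℕ => (j : ℤ) * 5 ^ (n * (n + 1) / 2))
    ∪ (Finset.Icc ⌈Real.sqrt n⌉₊ n).image (fun m => (5 : ℤ) ^ (n * (n + 1) / 2 + m))

open Finset

theorem eq_zero_of_sum_eq_zero_of_dvd_of_abs_le {N : ℕ} {f a B : ℕ → ℤ}
    (hdvd : ∀ i < N, a i ∣ f i) (hle : ∀ i < N, |f i| ≤ B i)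
    (hgap : ∀ i < N, ∑ j ∈ range i, B j < a i)
    (hsum : ∑ i ∈ range N, f i = 0) : ∀ i < N, f i = 0 := by
  induction N with
  | zero => intro i hi; omega
  | succ N ih =>
    rw [sum_range_succ] at hsum
    have hlast : f N = 0 := by
      have hbound : |f N| < a N :=
        calc |f N| = |∑ i ∈ range N, f i| := by rw [eq_neg_of_add_eq_zero_right hsum, abs_neg]
          _ ≤ ∑ i ∈ range N, |f i| := abs_sum_le_sum_abs _ _
          _ ≤ ∑ i ∈ range N, B i :=
            sum_le_sum fun i hi => hle i (by simp only [mem_range] at hi; omega)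
          _ < a N := hgap N N.lt_succ_self
      exact Int.eq_zero_of_abs_lt_dvd (hdvd N N.lt_succ_self) hbound
    rw [hlast, add_zero] at hsum
    intro i hi
    rcases Nat.lt_succ_iff_lt_or_eq.mp hi with hi | rfl
    · exact ih (fun j hj => hdvd j (by omega)) (fun j hj => hle j (by omega))
        (fun j hj => hgap j (by omega)) hsum i hi
    · exact hlast

theorem sum_range_two_mul_five_pow_lt (N : ℕ) :
    ∑ i ∈ range N, 2 * (5 : ℤ) ^ (i * (i + 1) / 2 + i) < 5 ^ (N * (N + 1) / 2) := by
  induction N with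
  | zero => norm_num
  | succ N ih =>
    have htri : (N + 1) * (N + 1 + 1) / 2 = (N * (N + 1) / 2 + N) + 1 := by
      rw [show (N + 1) * (N + 1 + 1) = N * (N + 1) + 2 * (N + 1) by ring,
        Nat.add_mul_div_left _ _ two_pos]
      omega
    have hmono : (5 : ℤ) ^ (N * (N + 1) / 2) ≤ 5 ^ (N * (N + 1) / 2 + N) :=
      pow_le_pow_right₀ (by norm_num) (Nat.le_add_right _ _)
    have hpos : (0 : ℤ) < 5 ^ (N * (N + 1) / 2 + N) := by positivity
    rw [sum_range_succ, htri, pow_succ]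
    linarith

theorem ceil_sqrt_le_self (n : ℕ) : ⌈Real.sqrt n⌉₊ ≤ n := by
  refine Nat.ceil_le.mpr (Real.sqrt_le_self_iff.mpr ?_)
  rcases n.eq_zero_or_pos with rfl | hn
  · simp
  · exact Or.inr (by exact_mod_cast hn)

theorem mem_Icc_of_mem_Hset {n : ℕ} {x : ℤ} (hx : x ∈ Hset n) :
    x ∈ Set.Icc 0 (5 ^ (n * (n + 1) / 2 + n)) := by
  simp only [Hset, mem_union, mem_singleton, mem_image, mem_Icc] at hx
  rcases hx with (rfl | ⟨j, ⟨-, hj⟩, rfl⟩) | ⟨m, ⟨-, hm⟩, rfl⟩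
  · exact ⟨le_rfl, by positivity⟩
  · have hj5 : (j : ℤ) ≤ 5 ^ n := by
      exact_mod_cast (hj.trans (ceil_sqrt_le_self n)).trans (Nat.lt_pow_self (by norm_num)).le
    refine ⟨by positivity, ?_⟩
    rw [pow_add, mul_comm (5 ^ _)]
    exact mul_le_mul_of_nonneg_right hj5 (by positivity)
  · exact ⟨by positivity, pow_le_pow_right₀ (by norm_num) (by omega)⟩

theorem pow_dvd_of_mem_Hset {n : ℕ} {x : ℤ} (hx : x ∈ Hset n) :
    (5 : ℤ) ^ (n * (n + 1) / 2) ∣ x := by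
  simp only [Hset, mem_union, mem_singleton, mem_image, mem_Icc] at hx
  rcases hx with (rfl | ⟨j, -, rfl⟩) | ⟨m, -, rfl⟩
  · exact dvd_zero _
  · exact dvd_mul_left _ _
  · exact pow_dvd_pow _ (Nat.le_add_right _ _)

theorem abs_sub_sub_sub_le {M a b c d : ℤ} (ha : a ∈ Set.Icc 0 M) (hb : b ∈ Set.Icc 0 M)
    (hc : c ∈ Set.Icc 0 M) (hd : d ∈ Set.Icc 0 M) : |a - b - (c - d)| ≤ 2 * M := by
  simp only [Set.mem_Icc] at ha hb hc hd
  rw [abs_le]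
  constructor <;> linarith

/-- Unique difference representation for the sets `Hₙ`. -/
theorem stmt_14 (N : ℕ) (d d' e e' : ℕ → ℤ)
    (hd : ∀ i, i < N → d i ∈ Hset i) (hd' : ∀ i, i < N → d' i ∈ Hset i)
    (he : ∀ i, i < N → e i ∈ Hset i) (he' : ∀ i, i < N → e' i ∈ Hset i)
    (hsum : ∑ i ∈ Finset.range N, (d i - d' i) = ∑ i ∈ Finset.range N, (e i - e' i)) :
    ∀ i, i < N → d i - d' i = e i - e' i := by
  intro i hi
  refine sub_eq_zero.mp <| eq_zero_of_sum_eq_zero_of_dvd_of_abs_le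
    (f := fun i => d i - d' i - (e i - e' i))
    (a := fun i => 5 ^ (i * (i + 1) / 2)) (B := fun i => 2 * 5 ^ (i * (i + 1) / 2 + i))
    (fun j hj => ?_) (fun j hj => ?_) (fun j _ => sum_range_two_mul_five_pow_lt j) ?_ i hi
  · exact dvd_sub (dvd_sub (pow_dvd_of_mem_Hset (hd j hj)) (pow_dvd_of_mem_Hset (hd' j hj)))
      (dvd_sub (pow_dvd_of_mem_Hset (he j hj)) (pow_dvd_of_mem_Hset (he' j hj)))
  · exact abs_sub_sub_sub_le (mem_Icc_of_mem_Hset (hd j hj)) (mem_Icc_of_mem_Hset (hd' j hj))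
      (mem_Icc_of_mem_Hset (he j hj)) (mem_Icc_of_mem_Hset (he' j hj))
  · rw [sum_sub_distrib, hsum, sub_self]
end

section
/- For the steep construction Hₙ = {0} ∪ {5^{n(n+1)/2 + m} : 0 ≤ m ≤ n}, the union H = ⋃ₙ (Hₙ \ {0}) = {5^j : j ≥ 0} consists of distinct powers of 5, and every element of the iterated sumset Sₙ = H₀ + H₁ + … + Hₙ (choosing one summand from each) is of the form ∑ εᵢ·5ⁱ with εᵢ ∈ {0,1}. Consequently there is no integer k ≥ 1 with both k ∈ Sₙ and 2k ∈ Sₙ. -/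
open Pointwise

/-- `Hₙ = {0} ∪ {5^{n(n+1)/2+m} : 0 ≤ m ≤ n}` from the steep construction. -/
def H2 (n : ℕ) : Finset ℕ :=
  insert 0 ((Finset.range (n + 1)).image (fun m => 5 ^ (n * (n + 1) / 2 + m)))

/-- `Sₙ = H₀ + H₁ + … + Hₙ` (one summand from each). -/
def Ssum : ℕ → Finset ℕ
  | 0 => H2 0
  | n + 1 => Ssum n + H2 (n + 1)

/-- Base-5 "digits in {0,1}" property, phrased via division. -/
def Qd (s : ℕ) : Prop := ∀ i, s / 5 ^ i % 5 ≤ 1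

lemma Qd_shift {s : ℕ} (h : Qd s) : Qd (s / 5) := by
  intro i
  rw [Nat.div_div_eq_div_mul, ← pow_succ']
  exact h (i + 1)

lemma Qd_zero : Qd 0 := fun i => by simp

lemma Qd_one : Qd 1 := by
  intro i
  rcases i with _ | i
  · norm_num
  · rw [Nat.div_eq_of_lt (Nat.one_lt_pow (Nat.succ_ne_zero i) (by norm_num))]
    simp

lemma Qd_add_pow {s e : ℕ} (hs : Qd s) (hlt : s < 5 ^ e) : Qd (s + 5 ^ e) := by
  intro i
  rcases lt_trichotomy i e with hie | rfl | hei
  · have h5 : (5:ℕ) ^ e = 5 ^ i * (5 * 5 ^ (e - i - 1)) := by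
      rw [← pow_succ', ← pow_add]
      congr 1
      omega
    rw [h5, Nat.add_mul_div_left _ _ (pow_pos (by norm_num) i),
      Nat.add_mul_mod_self_left]
    exact hs i
  · rw [Nat.add_div_right _ (pow_pos (by norm_num) i),
      Nat.div_eq_of_lt hlt]
  · have hp : 0 < (5:ℕ) ^ e := pow_pos (by norm_num) e
    have h1 : s + 5 ^ e < 5 ^ (e + 1) := by
      rw [pow_succ']
      omega
    have h2 : (5:ℕ) ^ (e + 1) ≤ 5 ^ i := Nat.pow_le_pow_right (by norm_num) hei
    rw [Nat.div_eq_of_lt (lt_of_lt_of_le h1 h2)]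
    simp

lemma digits_le_of_Qd : ∀ s : ℕ, Qd s → ∀ d ∈ Nat.digits 5 s, d ≤ 1 := by
  intro s
  induction s using Nat.strong_induction_on with
  | _ s ih =>
    intro hq d hd
    rcases s with _ | s
    · simp at hd
    · rw [Nat.digits_def' (by norm_num : 1 < 5) (Nat.succ_pos s)] at hd
      rcases List.mem_cons.mp hd with rfl | hmem
      · simpa using hq 0
      · exact ih _ (Nat.div_lt_self (Nat.succ_pos s) (by norm_num)) (Qd_shift hq) d hmem

lemma Tsucc (n : ℕ) : (n + 1) * (n + 1 + 1) / 2 = n * (n + 1) / 2 + (n + 1) := by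
  have h1 : (n + 1) * (n + 1 + 1) = n * (n + 1) + 2 * (n + 1) := by ring
  obtain ⟨t, ht⟩ := Nat.even_mul_succ_self n
  omega

lemma Ssum_spec : ∀ n, ∀ s ∈ Ssum n, Qd s ∧ s < 5 ^ (n * (n + 1) / 2 + n + 1) := by
  intro n
  induction n with
  | zero =>
    intro s hs
    simp [Ssum, H2] at hs
    rcases hs with rfl | rfl
    · exact ⟨Qd_zero, by norm_num⟩
    · exact ⟨Qd_one, by norm_num⟩
  | succ n ihn =>
    intro s hs
    rw [Ssum, Finset.mem_add] at hs
    obtain ⟨t, ht, h, hh, rfl⟩ := hs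
    obtain ⟨hQ, hlt⟩ := ihn t ht
    have hT := Tsucc n
    simp only [H2, Finset.mem_insert, Finset.mem_image, Finset.mem_range] at hh
    rcases hh with rfl | ⟨m, hm, rfl⟩
    · refine ⟨by simpa using hQ, ?_⟩
      have hle : (5:ℕ) ^ (n * (n + 1) / 2 + n + 1) ≤
          5 ^ ((n + 1) * (n + 1 + 1) / 2 + (n + 1) + 1) :=
        Nat.pow_le_pow_right (by norm_num) (by omega)
      omega
    · set e := (n + 1) * (n + 1 + 1) / 2 + m with he
      have hte : t < 5 ^ e :=
        lt_of_lt_of_le hlt (Nat.pow_le_pow_right (by norm_num) (by omega))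
      refine ⟨Qd_add_pow hQ hte, ?_⟩
      have hp : 0 < (5:ℕ) ^ e := pow_pos (by norm_num) e
      have h1 : t + 5 ^ e < 5 ^ (e + 1) := by
        rw [pow_succ']
        omega
      have h2 : (5:ℕ) ^ (e + 1) ≤ 5 ^ ((n + 1) * (n + 1 + 1) / 2 + (n + 1) + 1) :=
        Nat.pow_le_pow_right (by norm_num) (by omega)
      omega

lemma exists_decomp (j : ℕ) : ∃ n m, m ≤ n ∧ j = n * (n + 1) / 2 + m := by
  induction j with
  | zero => exact ⟨0, 0, le_refl 0, by norm_num⟩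
  | succ j ih =>
    obtain ⟨n, m, hmn, rfl⟩ := ih
    rcases lt_or_eq_of_le hmn with h | h
    · exact ⟨n, m + 1, by omega, by omega⟩
    · exact ⟨n + 1, 0, Nat.zero_le _, by have := Tsucc n; omega⟩

lemma no_double : ∀ k : ℕ, Qd k → Qd (2 * k) → k = 0 := by
  intro k
  induction k using Nat.strong_induction_on with
  | _ k ih =>
    intro hk h2k
    have h0 : k % 5 ≤ 1 := by simpa using hk 0
    have h1 : (2 * k) % 5 ≤ 1 := by simpa using h2k 0
    have hm0 : k % 5 = 0 := by omega
    rcases Nat.eq_zero_or_pos k with rfl | hk0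
    · rfl
    · exfalso
      have hdl : k / 5 < k := Nat.div_lt_self hk0 (by norm_num)
      have hq1 : Qd (k / 5) := Qd_shift hk
      have hq2 : Qd (2 * (k / 5)) := by
        have := Qd_shift h2k
        have heq : 2 * k / 5 = 2 * (k / 5) := by omega
        rwa [heq] at this
      have := ih (k / 5) hdl hq1 hq2
      omega

/-- The union `⋃ₙ (Hₙ \ {0})` is exactly the set of powers of `5`; every element of `Sₙ`
has base-5 digits in `{0,1}`; consequently there is no `k ≥ 1` with `k ∈ Sₙ` and `2k ∈ Sₙ`. -/
theorem stmt_17 :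
    (⋃ n : ℕ, (((H2 n).erase 0 : Finset ℕ) : Set ℕ)) = {x : ℕ | ∃ j : ℕ, x = 5 ^ j} ∧
    (∀ n : ℕ, ∀ s ∈ Ssum n, ∀ d ∈ Nat.digits 5 s, d ≤ 1) ∧
    (∀ n : ℕ, ¬ ∃ k : ℕ, 1 ≤ k ∧ k ∈ Ssum n ∧ 2 * k ∈ Ssum n) := by
  refine ⟨?_, ?_, ?_⟩
  · ext x
    simp only [Set.mem_iUnion, Finset.mem_coe, Finset.mem_erase, Set.mem_setOf_eq]
    constructor
    · rintro ⟨n, hx0, hx⟩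
      simp only [H2, Finset.mem_insert, Finset.mem_image, Finset.mem_range] at hx
      rcases hx with rfl | ⟨m, hm, rfl⟩
      · exact absurd rfl hx0
      · exact ⟨_, rfl⟩
    · rintro ⟨j, rfl⟩
      obtain ⟨n, m, hmn, rfl⟩ := exists_decomp j
      refine ⟨n, by positivity, ?_⟩
      simp only [H2, Finset.mem_insert, Finset.mem_image, Finset.mem_range]
      exact Or.inr ⟨m, by omega, rfl⟩
  · intro n s hs
    exact digits_le_of_Qd s (Ssum_spec n s hs).1
  · rintro n ⟨k, hk1, hkS, h2kS⟩
    have h1 := (Ssum_spec n k hkS).1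
    have h2 := (Ssum_spec n _ h2kS).1
    have := no_double k h1 h2
    omega
end

section
/- Approximation transfer for Cesàro averages: let T be measure-preserving, I of finite positive measure, A, B ⊆ I measurable, and D ⊆ I with μ(B △ D) < ε. If for all measurable B₁ ⊆ I and all n, (1/a_n(I)) ∑_{k=0}^{n−1} μ(I ∩ T^k B₁) ≤ c·μ(B₁), then for all n: |(1/a_n(I)) ∑_{k=0}^{n−1} μ(A ∩ T^k B) − (1/a_n(I)) ∑_{k=0}^{n−1} μ(A ∩ T^k D)| ≤ c·ε. -/
open MeasureTheory

lemma stmt_18_aux {X : Type*} [MeasurableSpace X] (μ : Measure X)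
    (T : X → X) (I A B D : Set X) (hIfin : μ I < ⊤) (hAI : A ⊆ I)
    (k : ℕ) :
    (μ (A ∩ T^[k] '' B)).toReal ≤
      (μ (A ∩ T^[k] '' D)).toReal + (μ (I ∩ T^[k] '' (B \ D))).toReal := by
  have hsub : A ∩ T^[k] '' B ⊆ (A ∩ T^[k] '' D) ∪ (I ∩ T^[k] '' (B \ D)) := by
    rintro x ⟨hxA, y, hyB, rfl⟩
    by_cases hyD : y ∈ D
    · exact Or.inl ⟨hxA, y, hyD, rfl⟩
    · exact Or.inr ⟨hAI hxA, y, ⟨hyB, hyD⟩, rfl⟩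
  have h1 : μ (A ∩ T^[k] '' B) ≤ μ (A ∩ T^[k] '' D) + μ (I ∩ T^[k] '' (B \ D)) :=
    (measure_mono hsub).trans (measure_union_le _ _)
  have hf1 : μ (A ∩ T^[k] '' D) < ⊤ :=
    lt_of_le_of_lt (measure_mono (Set.inter_subset_left.trans hAI)) hIfin
  have hf2 : μ (I ∩ T^[k] '' (B \ D)) < ⊤ :=
    lt_of_le_of_lt (measure_mono Set.inter_subset_left) hIfin
  have := ENNReal.toReal_mono (by simp [hf1.ne, hf2.ne]) h1
  rwa [ENNReal.toReal_add hf1.ne hf2.ne] at this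

/-- Approximation transfer for Cesàro averages: if
`(1/a_n(I)) ∑_{k<n} μ(I ∩ T^k B₁) ≤ c μ(B₁)` for all `B₁ ⊆ I` and all `n`, and
`μ(B △ D) < ε`, then the normalized correlation sums of `A` against `B` and against `D`
differ by at most `c ε`. -/
theorem stmt_18 {X : Type*} [MeasurableSpace X] (μ : Measure X)
    (T : X → X) (hT : MeasurePreserving T μ μ)
    (I : Set X) (hI : MeasurableSet I) (hI0 : 0 < μ I) (hIfin : μ I < ⊤)
    (A B D : Set X) (hA : MeasurableSet A) (hB : MeasurableSet B) (hD : MeasurableSet D)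
    (hAI : A ⊆ I) (hBI : B ⊆ I) (hDI : D ⊆ I)
    (ε c : ℝ) (hε : 0 < ε) (hc : 0 < c)
    (hBD : (μ (symmDiff B D)).toReal < ε)
    (a : ℕ → ℝ)
    (ha : ∀ n, a n = ∑ k ∈ Finset.range n, (μ (I ∩ T^[k] '' I)).toReal / (μ I).toReal ^ 2)
    (hbound : ∀ B₁ : Set X, MeasurableSet B₁ → B₁ ⊆ I → ∀ n : ℕ,
      (∑ k ∈ Finset.range n, (μ (I ∩ T^[k] '' B₁)).toReal) / a n ≤ c * (μ B₁).toReal) :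
    ∀ n : ℕ,
      |(∑ k ∈ Finset.range n, (μ (A ∩ T^[k] '' B)).toReal) / a n
        - (∑ k ∈ Finset.range n, (μ (A ∩ T^[k] '' D)).toReal) / a n| ≤ c * ε := by
  intro n
  have hsdfin : μ (symmDiff B D) < ⊤ := by
    refine lt_of_le_of_lt (measure_mono ?_) hIfin
    intro x hx
    rcases hx with ⟨hxB, _⟩ | ⟨hxD, _⟩
    · exact hBI hxB
    · exact hDI hxD
  -- bounds on the two difference pieces
  have hmBD : (μ (B \ D)).toReal ≤ ε := by
    refine le_trans (ENNReal.toReal_mono hsdfin.ne (measure_mono ?_)) hBD.le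
    exact fun x hx => Or.inl hx
  have hmDB : (μ (D \ B)).toReal ≤ ε := by
    refine le_trans (ENNReal.toReal_mono hsdfin.ne (measure_mono ?_)) hBD.le
    exact fun x hx => Or.inr hx
  set SB := ∑ k ∈ Finset.range n, (μ (A ∩ T^[k] '' B)).toReal with hSB
  set SD := ∑ k ∈ Finset.range n, (μ (A ∩ T^[k] '' D)).toReal with hSD
  have han : 0 ≤ a n := by
    rw [ha n]
    exact Finset.sum_nonneg fun k _ => div_nonneg ENNReal.toReal_nonneg
      (pow_nonneg ENNReal.toReal_nonneg 2)
  have hdiv : ∀ s t : ℝ, s ≤ t → s / a n ≤ t / a n := by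
    intro s t hst
    rcases han.eq_or_lt with h0 | h0
    · simp [← h0]
    · exact div_le_div_of_nonneg_right hst han
  rw [abs_le]
  constructor
  · -- lower bound: SD - SB ≤ ... , i.e. -(cε) ≤ SB/a - SD/a
    have key : ∀ k ∈ Finset.range n, (μ (A ∩ T^[k] '' D)).toReal ≤
        (μ (A ∩ T^[k] '' B)).toReal + (μ (I ∩ T^[k] '' (D \ B))).toReal :=
      fun k _ => stmt_18_aux μ T I A D B hIfin hAI k
    have hsum : SD ≤ SB + ∑ k ∈ Finset.range n, (μ (I ∩ T^[k] '' (D \ B))).toReal := by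
      rw [← Finset.sum_add_distrib]
      exact Finset.sum_le_sum key
    have h2 : SD / a n - SB / a n ≤ c * ε := by
      have := hdiv _ _ hsum
      rw [add_div] at this
      have h3 := (hbound (D \ B) (hD.diff hB) (fun x hx => hDI hx.1) n)
      have h4 : c * (μ (D \ B)).toReal ≤ c * ε := by
        exact mul_le_mul_of_nonneg_left hmDB hc.le
      linarith
    linarith
  · have key : ∀ k ∈ Finset.range n, (μ (A ∩ T^[k] '' B)).toReal ≤
        (μ (A ∩ T^[k] '' D)).toReal + (μ (I ∩ T^[k] '' (B \ D))).toReal :=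
      fun k _ => stmt_18_aux μ T I A B D hIfin hAI k
    have hsum : SB ≤ SD + ∑ k ∈ Finset.range n, (μ (I ∩ T^[k] '' (B \ D))).toReal := by
      rw [← Finset.sum_add_distrib]
      exact Finset.sum_le_sum key
    have := hdiv _ _ hsum
    rw [add_div] at this
    have h3 := (hbound (B \ D) (hB.diff hD) (fun x hx => hBI hx.1) n)
    have h4 : c * (μ (B \ D)).toReal ≤ c * ε :=
      mul_le_mul_of_nonneg_left hmBD hc.le
    linarith
end
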